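/- arXiv:1311.4940 — 5 statements merged into one kernel-verified Lean document; each statement's English description precedes it below -/
import Mathlib

section
/- In a value quantale V, for every ε well above 0 there exists δ well above 0 such that δ + δ ≤ ε. -/
/-!
Since `0 = ⋀ {x | 0 ≺ x}` and `x + -` preserves infima, the sums `x + y` with `0 ≺ x, y` have
infimum `0`. As `0 ≺ ε`, one of these sums lies below `ε`, and `δ = x ⊓ y` is then well above `0`
with `δ + δ ≤ x + y ≤ ε`.
-/

/-- `wellAbove x y` means `y` is well above `x`: for every subset `S` with
`⨅ S ≤ x` there is `s₀ ∈ S` with `s₀ ≤ y`. (Written `x ≺ y`.) -/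
def wellAbove {V : Type*} [CompleteLattice V] (x y : V) : Prop :=
  ∀ S : Set V, sInf S ≤ x → ∃ s ∈ S, s ≤ y

/-- Flagg's notion of quantale: a complete lattice with an associative
commutative addition with unit `⊥ = 0` commuting with arbitrary infima. -/
structure IsFlaggQuantale {V : Type*} [CompleteLattice V] (add : V → V → V) : Prop where
  assoc : ∀ x y z : V, add (add x y) z = add x (add y z)
  comm : ∀ x y : V, add x y = add y x
  add_zero : ∀ x : V, add x ⊥ = x
  add_sInf : ∀ (x : V) (S : Set V), add x (sInf S) = sInf (add x '' S)

/-- A value quantale: a Flagg quantale which is completely distributive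
(`y = ⨅ {x | x ≻ y}`), with `∞ ≻ 0`, and binary infima of elements well above
`0` again well above `0`. -/
structure IsValueQuantale {V : Type*} [CompleteLattice V] (add : V → V → V)
    extends IsFlaggQuantale add : Prop where
  approx : ∀ y : V, y = sInf {x | wellAbove y x}
  top_wellAbove_bot : wellAbove (⊥ : V) ⊤
  inf_wellAbove_bot : ∀ x y : V, wellAbove ⊥ x → wellAbove ⊥ y → wellAbove ⊥ (x ⊓ y)

namespace IsFlaggQuantale

variable {V : Type*} [CompleteLattice V] {add : V → V → V}

theorem monotone_add_left (hQ : IsFlaggQuantale add) (x : V) : Monotone (add x) :=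
  Monotone.of_map_inf fun b b' => by
    rw [← sInf_pair, hQ.add_sInf, Set.image_pair, sInf_pair]

theorem add_inf_self_le (hQ : IsFlaggQuantale add) (x y : V) :
    add (x ⊓ y) (x ⊓ y) ≤ add x y :=
  calc add (x ⊓ y) (x ⊓ y) ≤ add (x ⊓ y) y := hQ.monotone_add_left _ inf_le_right
    _ = add y (x ⊓ y) := hQ.comm _ _
    _ ≤ add y x := hQ.monotone_add_left _ inf_le_left
    _ = add x y := hQ.comm _ _

theorem sInf_image2_add_eq_bot (hQ : IsFlaggQuantale add) {A : Set V} (hA : sInf A = ⊥) :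
    sInf (Set.image2 add A A) = ⊥ := by
  rw [eq_bot_iff, ← hA]
  refine le_sInf fun x hx => ?_
  calc sInf (Set.image2 add A A) ≤ sInf (add x '' A) :=
        sInf_le_sInf (Set.image_subset_image2_right hx)
    _ = add x (sInf A) := (hQ.add_sInf x A).symm
    _ = x := by rw [hA, hQ.add_zero]

end IsFlaggQuantale

theorem exists_half {V : Type*} [CompleteLattice V] {add : V → V → V}
    (hV : IsValueQuantale add) {ε : V} (hε : wellAbove ⊥ ε) :
    ∃ δ : V, wellAbove ⊥ δ ∧ add δ δ ≤ ε := by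
  obtain ⟨_, ⟨x, hx, y, hy, rfl⟩, hxy⟩ :=
    hε _ (hV.sInf_image2_add_eq_bot (hV.approx ⊥).symm).le
  exact ⟨x ⊓ y, hV.inf_wellAbove_bot x y hx hy, (hV.add_inf_self_le x y).trans hxy⟩
end

section
/- In a value quantale V, if a ≺ b then there exists c ∈ V with a ≺ c and c ≺ b (the well above relation interpolates). -/
/-!
Complete distributivity gives `a = ⨅ {c | a ≺ c}` and `c = ⨅ {x | c ≺ x}` for each such `c`,
so `a` is the infimum of all `x` reachable from `a` by two `≺`-steps. Since `a ≺ b`, some such `x`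
lies below `b`, and the middle element `c` of `a ≺ c ≺ x ≤ b` interpolates.
-/

theorem wellAbove.mono_right {V : Type*} [CompleteLattice V] {x y z : V}
    (hxy : wellAbove x y) (hyz : y ≤ z) : wellAbove x z := fun S hS => by
  obtain ⟨s, hs, hsy⟩ := hxy S hS
  exact ⟨s, hs, hsy.trans hyz⟩

section Interpolation

variable {V : Type*} [CompleteLattice V]
  (approx : ∀ y : V, sInf {x | wellAbove y x} ≤ y)
include approx

theorem sInf_wellAbove_wellAbove_le (a : V) :
    sInf {x | ∃ c, wellAbove a c ∧ wellAbove c x} ≤ a :=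
  calc sInf {x | ∃ c, wellAbove a c ∧ wellAbove c x}
      ≤ sInf {c | wellAbove a c} := by
        refine le_sInf fun c hac => (sInf_le_sInf ?_).trans (approx c)
        exact fun x hcx => ⟨c, hac, hcx⟩
    _ ≤ a := approx a

theorem exists_wellAbove_wellAbove_of_wellAbove {a b : V} (hab : wellAbove a b) :
    ∃ c, wellAbove a c ∧ wellAbove c b := by
  obtain ⟨x, ⟨c, hac, hcx⟩, hxb⟩ := hab _ (sInf_wellAbove_wellAbove_le approx a)
  exact ⟨c, hac, hcx.mono_right hxb⟩

end Interpolation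

theorem wellAbove_interpolates {V : Type*} [CompleteLattice V] {add : V → V → V}
    (hV : IsValueQuantale add) {a b : V} (hab : wellAbove a b) :
    ∃ c : V, wellAbove a c ∧ wellAbove c b :=
  exists_wellAbove_wellAbove_of_wellAbove (fun y => (hV.approx y).ge) hab
end

section
/- Let V, W be value quantales, (X, d_X) a V-continuity space and (Y, d_Y) a W-continuity space. A function f : X → Y is ε-δ continuous (for every x ∈ X and ε ≻ 0 in W there exists δ ≻ 0 in V such that d_X(x,y) ≺ δ implies d_Y(f(x), f(y)) ≺ ε) if and only if f is continuous with respect to the induced open-ball topologies on X and Y. -/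
/-! The forward direction is immediate: an ε-ball inside an open set pulls back to a δ-ball.
Conversely, balls are open: by interpolation `d(x,z) ≺ r ≺ ε`, and `r` exceeds `d(x,z) + t` for
some `t ≻ 0` (as `0 = ⋀ {t | t ≻ 0}` and `+` preserves infima), so the triangle inequality puts
the `t`-ball around `z` inside the `ε`-ball around `x`. The preimage of the ε-ball around `f x`
is then an open neighbourhood of `x`, hence contains a δ-ball. -/

namespace wellAbove

variable {V : Type*} [CompleteLattice V] {a a' b b' : V}

lemma mono (h : wellAbove a b) (ha : a' ≤ a) (hb : b ≤ b') : wellAbove a' b' := fun S hS =>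
  let ⟨s, hs, hsb⟩ := h S (hS.trans ha)
  ⟨s, hs, hsb.trans hb⟩

lemma le (h : wellAbove a b) : a ≤ b := by
  obtain ⟨s, rfl, hsb⟩ := h {a} (by simp)
  exact hsb

end wellAbove

section Quantale

variable {V : Type*} [CompleteLattice V] {add : V → V → V}

lemma IsFlaggQuantale.add_le_add_left (hV : IsFlaggQuantale add) {a b : V} (h : a ≤ b) (x : V) :
    add x a ≤ add x b := by
  have hpair := hV.add_sInf x {a, b}
  rw [Set.image_pair, sInf_pair, sInf_pair, inf_eq_left.mpr h] at hpair
  exact hpair ▸ inf_le_right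

namespace IsValueQuantale

lemma exists_add_le_of_wellAbove (hV : IsValueQuantale add) {p r : V} (h : wellAbove p r) :
    ∃ t, wellAbove ⊥ t ∧ add p t ≤ r := by
  have hinf : sInf (add p '' {t | wellAbove ⊥ t}) ≤ p := by
    rw [← hV.add_sInf, ← hV.approx ⊥, hV.add_zero]
  obtain ⟨_, ⟨t, ht, rfl⟩, htr⟩ := h _ hinf
  exact ⟨t, ht, htr⟩

lemma exists_wellAbove_wellAbove (hV : IsValueQuantale add) {p q : V} (h : wellAbove p q) :
    ∃ r, wellAbove p r ∧ wellAbove r q := by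
  let T : Set V := {r | ∃ s, wellAbove p s ∧ wellAbove s r}
  have hinf : sInf T ≤ p := by
    rw [hV.approx p]
    refine le_sInf fun s hs => ?_
    calc sInf T ≤ sInf {r | wellAbove s r} := sInf_le_sInf fun r hr => ⟨s, hs, hr⟩
      _ = s := (hV.approx s).symm
  obtain ⟨r, ⟨s, hps, hsr⟩, hrq⟩ := h T hinf
  exact ⟨s, hps, hsr.mono le_rfl hrq⟩

end IsValueQuantale

section Ball

variable {X : Type*}

def openBall (d : X → X → V) (x : X) (ε : V) : Set X := {y | wellAbove (d x y) ε}

lemma exists_openBall_subset_openBall (hV : IsValueQuantale add) {d : X → X → V}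
    (d_triangle : ∀ x y z, d x z ≤ add (d x y) (d y z)) {x z : X} {ε : V}
    (hz : z ∈ openBall d x ε) : ∃ δ, wellAbove ⊥ δ ∧ openBall d z δ ⊆ openBall d x ε := by
  obtain ⟨r, hzr, hrε⟩ := hV.exists_wellAbove_wellAbove hz
  obtain ⟨t, ht, hzt⟩ := hV.exists_add_le_of_wellAbove hzr
  refine ⟨t, ht, fun w hw => hrε.mono ?_ le_rfl⟩
  calc d x w ≤ add (d x z) (d z w) := d_triangle x z w
    _ ≤ add (d x z) t := hV.add_le_add_left hw.le _
    _ ≤ r := hzt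

lemma isOpen_openBall (hV : IsValueQuantale add) {d : X → X → V}
    (d_triangle : ∀ x y z, d x z ≤ add (d x y) (d y z)) {t : TopologicalSpace X}
    (ht : ∀ U : Set X, t.IsOpen U ↔ ∀ x ∈ U, ∃ ε : V, wellAbove ⊥ ε ∧ openBall d x ε ⊆ U)
    (x : X) (ε : V) : t.IsOpen (openBall d x ε) :=
  (ht _).mpr fun _ hz => exists_openBall_subset_openBall hV d_triangle hz

end Ball

end Quantale

theorem flagg_continuous_iff_general {V W X Y : Type*} [CompleteLattice V] [CompleteLattice W]
    {addW : W → W → W}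
    (hW : IsValueQuantale addW)
    (dX : X → X → V)
    (dY : Y → Y → W) (dY_self : ∀ y, dY y y = ⊥)
    (dY_triangle : ∀ x y z, dY x z ≤ addW (dY x y) (dY y z))
    (tX : TopologicalSpace X) (tY : TopologicalSpace Y)
    (htX : ∀ U : Set X, tX.IsOpen U ↔ ∀ x ∈ U, ∃ ε : V, wellAbove ⊥ ε ∧
      {y : X | wellAbove (dX x y) ε} ⊆ U)
    (htY : ∀ U : Set Y, tY.IsOpen U ↔ ∀ y ∈ U, ∃ ε : W, wellAbove ⊥ ε ∧
      {z : Y | wellAbove (dY y z) ε} ⊆ U)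
    (f : X → Y) :
    (∀ x : X, ∀ ε : W, wellAbove ⊥ ε → ∃ δ : V, wellAbove ⊥ δ ∧
      ∀ y : X, wellAbove (dX x y) δ → wellAbove (dY (f x) (f y)) ε) ↔
    @Continuous X Y tX tY f := by
  rw [continuous_def]
  constructor
  · intro hf U hU
    refine (htX _).mpr fun x hx => ?_
    obtain ⟨ε, hε, hεU⟩ := (htY U).mp hU (f x) hx
    obtain ⟨δ, hδ, hδε⟩ := hf x ε hε
    exact ⟨δ, hδ, fun y hy => hεU (hδε y hy)⟩
  · intro hf x ε hε
    have hopen := hf _ (isOpen_openBall hW dY_triangle htY (f x) ε)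
    have hx : f x ∈ openBall dY (f x) ε := by rw [openBall, Set.mem_ofPred_eq, dY_self]; exact hε
    obtain ⟨δ, hδ, hδε⟩ := (htX _).mp hopen x hx
    exact ⟨δ, hδ, fun y hy => hδε hy⟩

theorem flagg_continuous_iff {V W X Y : Type*} [CompleteLattice V] [CompleteLattice W]
    {addV : V → V → V} {addW : W → W → W}
    (hV : IsValueQuantale addV) (hW : IsValueQuantale addW)
    (dX : X → X → V) (dX_self : ∀ x, dX x x = ⊥)
    (dX_triangle : ∀ x y z, dX x z ≤ addV (dX x y) (dX y z))
    (dY : Y → Y → W) (dY_self : ∀ y, dY y y = ⊥)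
    (dY_triangle : ∀ x y z, dY x z ≤ addW (dY x y) (dY y z))
    (tX : TopologicalSpace X) (tY : TopologicalSpace Y)
    (htX : ∀ U : Set X, tX.IsOpen U ↔ ∀ x ∈ U, ∃ ε : V, wellAbove ⊥ ε ∧
      {y : X | wellAbove (dX x y) ε} ⊆ U)
    (htY : ∀ U : Set Y, tY.IsOpen U ↔ ∀ y ∈ U, ∃ ε : W, wellAbove ⊥ ε ∧
      {z : Y | wellAbove (dY y z) ε} ⊆ U)
    (f : X → Y) :
    (∀ x : X, ∀ ε : W, wellAbove ⊥ ε → ∃ δ : V, wellAbove ⊥ δ ∧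
      ∀ y : X, wellAbove (dX x y) δ → wellAbove (dY (f x) (f y)) ε) ↔
    @Continuous X Y tX tY f :=
  flagg_continuous_iff_general hW dX dY dY_self dY_triangle tX tY htX htY f
end

section
/- A topological space arising as the open-ball topology of a symmetric separated [0,∞]-continuity space (i.e., a metrizable space) is T0, regular, and admits a σ-discrete basis. -/
/-- A family of subsets of a topological space is discrete if every point has a
neighbourhood meeting at most one member of the family. -/
def IsDiscreteFamily {X : Type*} [TopologicalSpace X] (B : Set (Set X)) : Prop :=
  ∀ x : X, ∃ N ∈ nhds x, {s ∈ B | (s ∩ N).Nonempty}.Subsingleton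

/-!
On `[0, ∞]`, `wellAbove x y` just means `x < y`, so the topology is that of the extended metric
`d`, hence T0 and regular. For the σ-discrete basis (Stone's argument), well-order the space; for
radii `R` and `r`, let the core of a point `a` be the set of points `x` lying well inside
`eball a R` for which `a` is the first point of `eball x R`. Cores of distinct points are
`4 r`-apart, so the `r`-neighbourhoods of the cores form a discrete family of open sets, and
letting `R` and `r` run through `1 / m` and `1 / n` these families together form a basis.
-/

open ENNReal Set Metric

theorem wellAbove_iff_lt {V : Type*} [CompleteLinearOrder V] [DenselyOrdered V] {x y : V} :
    wellAbove x y ↔ x < y := by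
  refine ⟨fun h => ?_, fun hxy S hS => ?_⟩
  · have hIoi : sInf (Ioi x) ≤ x := le_of_forall_gt_imp_ge_of_dense fun _ hc => sInf_le hc
    obtain ⟨s, hs, hsy⟩ := h (Ioi x) hIoi
    exact lt_of_lt_of_le hs hsy
  · obtain ⟨s, hs, hsy⟩ := sInf_lt_iff.mp (hS.trans_lt hxy)
    exact ⟨s, hs, hsy.le⟩

namespace SigmaDiscreteBasis

variable {X : Type*} [PseudoEMetricSpace X] {R r : ℝ≥0∞} {a b x y : X}

def core (R r : ℝ≥0∞) (a : X) : Set X :=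
  {x | edist x a + 4 * r < R ∧ ∀ b ∈ eball x R, ¬ WellOrderingRel b a}

def cell (R r : ℝ≥0∞) (a : X) : Set X :=
  ⋃ x ∈ core R r a, eball x r

theorem edist_lt_of_mem_core (hx : x ∈ core R r a) : edist x a < R :=
  le_self_add.trans_lt hx.1

theorem isOpen_cell : IsOpen (cell R r a) :=
  isOpen_biUnion fun _ _ => isOpen_eball

theorem cell_subset_eball : cell R r a ⊆ eball a R := by
  refine iUnion₂_subset fun x hx => eball_subset ?_ (edist_lt_of_mem_core hx).ne_top
  calc edist x a + r ≤ edist x a + 4 * r := by gcongr; exact le_mul_of_one_le_left' (by norm_num)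
    _ ≤ R := hx.1.le

theorem four_mul_le_edist_of_wellOrderingRel (hab : WellOrderingRel a b) (hx : x ∈ core R r a)
    (hy : y ∈ core R r b) : 4 * r ≤ edist x y := by
  have hay : R ≤ edist a y := not_lt.1 fun h => hy.2 a (mem_eball.2 h) hab
  refine (ENNReal.add_le_add_iff_left (edist_lt_of_mem_core hx).ne_top).1 ?_
  calc edist x a + 4 * r ≤ R := hx.1.le
    _ ≤ edist a y := hay
    _ ≤ edist x a + edist x y := by rw [edist_comm x a]; exact edist_triangle _ _ _

theorem four_mul_le_edist_of_ne (hab : a ≠ b) (hx : x ∈ core R r a) (hy : y ∈ core R r b) :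
    4 * r ≤ edist x y := by
  rcases trichotomous_of WellOrderingRel a b with h | h | h
  · exact four_mul_le_edist_of_wellOrderingRel h hx hy
  · exact absurd h hab
  · rw [edist_comm]; exact four_mul_le_edist_of_wellOrderingRel h hy hx

theorem isDiscreteFamily_range_cell (R : ℝ≥0∞) (hr : 0 < r) :
    IsDiscreteFamily (range (cell (X := X) R r)) := by
  intro z
  refine ⟨eball z r, eball_mem_nhds z hr, ?_⟩
  rintro _ ⟨⟨a, rfl⟩, p, hpa, hpz⟩ _ ⟨⟨b, rfl⟩, q, hqb, hqz⟩
  obtain ⟨x, hx, hpx⟩ := mem_iUnion₂.1 hpa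
  obtain ⟨y, hy, hqy⟩ := mem_iUnion₂.1 hqb
  by_contra hab
  have hxy : edist x y < 4 * r :=
    calc edist x y ≤ edist x z + edist z y := edist_triangle _ _ _
      _ ≤ edist p x + edist p z + (edist q z + edist q y) :=
          add_le_add (edist_triangle_left _ _ _) (edist_triangle_left _ _ _)
      _ < r + r + (r + r) :=
          ENNReal.add_lt_add (ENNReal.add_lt_add hpx hpz) (ENNReal.add_lt_add hqz hqy)
      _ = 4 * r := by ring
  exact (four_mul_le_edist_of_ne (fun h => hab (congrArg _ h)) hx hy).not_gt hxy

theorem exists_mem_cell_subset_eball (x : X) (hR : 0 < R) :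
    ∃ a, ∃ n : ℕ, x ∈ cell R (n : ℝ≥0∞)⁻¹ a ∧ cell R (n : ℝ≥0∞)⁻¹ a ⊆ eball x (R + R) := by
  have wf : WellFounded (WellOrderingRel (α := X)) := IsWellFounded.wf
  let a := wf.min (eball x R) ⟨x, mem_eball_self hR⟩
  have hax : edist a x < R := mem_eball.1 (wf.min_mem _ _)
  obtain ⟨n, -, hn⟩ := exists_nat_pos_inv_mul_lt (a := 4) (by simp) (tsub_pos_of_lt hax).ne'
  have hxcore : x ∈ core R (n : ℝ≥0∞)⁻¹ a :=
    ⟨by rw [mul_comm] at hn; rw [edist_comm]; exact lt_tsub_iff_left.1 hn,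
      fun b hb => wf.not_lt_min _ hb⟩
  refine ⟨a, n, mem_iUnion₂.2 ⟨x, hxcore, mem_eball_self (by simp)⟩, ?_⟩
  exact cell_subset_eball.trans (eball_subset (add_le_add_left hax.le R) hax.ne_top)

end SigmaDiscreteBasis

open SigmaDiscreteBasis TopologicalSpace in
theorem exists_sigma_discrete_basis (X : Type*) [PseudoEMetricSpace X] :
    ∃ B : ℕ → Set (Set X), (∀ n, IsDiscreteFamily (B n)) ∧ IsTopologicalBasis (⋃ n, B n) := by
  refine ⟨fun k => range (cell (k.unpair.1 : ℝ≥0∞)⁻¹ (k.unpair.2 : ℝ≥0∞)⁻¹),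
    fun k => isDiscreteFamily_range_cell _ (by simp), ?_⟩
  refine isTopologicalBasis_of_isOpen_of_nhds ?_ fun x U hxU hU => ?_
  · simp only [mem_iUnion, mem_range]
    rintro _ ⟨k, a, rfl⟩
    exact isOpen_cell
  obtain ⟨ε, hε, hεU⟩ := EMetric.isOpen_iff.1 hU x hxU
  obtain ⟨m, hm⟩ := exists_inv_nat_lt (ENNReal.half_pos hε.ne').ne'
  obtain ⟨a, n, hxa, hsub⟩ := exists_mem_cell_subset_eball x (R := (m : ℝ≥0∞)⁻¹) (by simp)
  refine ⟨_, mem_iUnion.2 ⟨Nat.pair m n, a, by simp only [Nat.unpair_pair]⟩, hxa,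
    hsub.trans ((eball_subset_eball ?_).trans hεU)⟩
  calc (m : ℝ≥0∞)⁻¹ + (m : ℝ≥0∞)⁻¹ ≤ ε / 2 + ε / 2 := add_le_add hm.le hm.le
    _ = ε := ENNReal.add_halves ε

open ENNReal in
theorem metrizable_is_T0_regular_sigma_discrete_basis
    {X : Type*} [t : TopologicalSpace X] (d : X → X → ℝ≥0∞)
    (d_self : ∀ x, d x x = 0)
    (d_triangle : ∀ x y z, d x z ≤ d x y + d y z)
    (d_symm : ∀ x y, d x y = d y x)
    (d_sep : ∀ x y, d x y = 0 → d y x = 0 → x = y)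
    (ht : ∀ U : Set X, IsOpen U ↔ ∀ x ∈ U, ∃ ε : ℝ≥0∞, wellAbove 0 ε ∧
      {y : X | wellAbove (d x y) ε} ⊆ U) :
    T0Space X ∧ RegularSpace X ∧
      ∃ B : ℕ → Set (Set X), (∀ n, IsDiscreteFamily (B n)) ∧
        TopologicalSpace.IsTopologicalBasis (⋃ n, B n) := by
  let _ : EMetricSpace X :=
    { edist := d
      edist_self := d_self
      edist_comm := d_symm
      edist_triangle := d_triangle
      eq_of_edist_eq_zero := fun {x y} h => d_sep x y h (d_symm x y ▸ h) }
  obtain rfl : t = UniformSpace.toTopologicalSpace := by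
    ext U
    have eball_eq (x : X) (ε : ℝ≥0∞) : eball x ε = {y | d x y < ε} := by ext; exact mem_eball'
    simp only [ht, wellAbove_iff_lt, EMetric.isOpen_iff, eball_eq, gt_iff_lt]
  exact ⟨inferInstance, inferInstance, exists_sigma_discrete_basis X⟩
end

section
/- A T0, regular topological space admitting a σ-discrete basis is metrizable. -/
/-!
Regularity and the σ-discrete basis `⋃ n, B n` make every open set `U` the union of the open sets
`shrinking (B n) U`, whose closures stay inside `U` because closure commutes with unions of a
discrete family; countable covers of this kind give normality. Urysohn functions that vanish off
`s ∈ B n` and equal `1` on the closure of `shrinking (B m) s` form, for each pair `(n, m)`, a locally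
finite family, hence a single continuous map into the metric space `B n →ᵤ ℝ`. Together these maps
embed `X` into a countable product of metric spaces.
-/

open Set Filter Topology TopologicalSpace
open scoped UniformConvergence

section

variable {X : Type*} [TopologicalSpace X]

theorem IsDiscreteFamily.mono {F G : Set (Set X)} (hF : IsDiscreteFamily F) (hGF : G ⊆ F) :
    IsDiscreteFamily G := fun x =>
  (hF x).imp fun _ ⟨hN, hsub⟩ => ⟨hN, hsub.anti fun _ hs => ⟨hGF hs.1, hs.2⟩⟩

theorem IsDiscreteFamily.locallyFinite {F : Set (Set X)} (hF : IsDiscreteFamily F) :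
    LocallyFinite fun s : F => (s : Set X) := fun x =>
  let ⟨N, hN, hsub⟩ := hF x
  ⟨N, hN, (hsub.finite.preimage Subtype.val_injective.injOn).subset fun s hs => ⟨s.2, hs⟩⟩

theorem IsDiscreteFamily.closure_sUnion {F : Set (Set X)} (hF : IsDiscreteFamily F) :
    closure (⋃₀ F) = ⋃ s ∈ F, closure s := by
  rw [sUnion_eq_iUnion, hF.locallyFinite.closure_iUnion, biUnion_eq_iUnion]

theorem LocallyFinite.continuous_uniformFun_ofFun {ι β : Type*} [UniformSpace β] [Zero β]
    {f : ι → X → β} (hlf : LocallyFinite fun i => Function.support (f i))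
    (hf : ∀ i, Continuous (f i)) : Continuous fun x => UniformFun.ofFun fun i => f i x := by
  refine continuous_iff_continuousAt.2 fun x₀ => ?_
  rw [ContinuousAt, UniformFun.tendsto_iff_tendstoUniformly]
  intro V hV
  obtain ⟨N, hN, hfin⟩ := hlf x₀
  have hnear : ∀ᶠ x in 𝓝 x₀, ∀ i ∈ {i | (Function.support (f i) ∩ N).Nonempty},
      (f i x₀, f i x) ∈ V :=
    hfin.eventually_all.2 fun i _ => (hf i).continuousAt (UniformSpace.ball_mem_nhds _ hV)
  filter_upwards [hN, hnear] with x hxN hx i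
  by_cases hi : (Function.support (f i) ∩ N).Nonempty
  · exact hx i hi
  · have hzero : ∀ y ∈ N, f i y = 0 := fun y hy =>
      Function.notMem_support.1 fun h => hi ⟨y, h, hy⟩
    simp only [Function.comp_apply, UniformFun.toFun_ofFun, hzero x₀ (mem_of_mem_nhds hN),
      hzero x hxN]
    exact refl_mem_uniformity hV

theorem isInducing_pi_of_forall_mem_nhds {ι : Type*} {Y : ι → Type*}
    [∀ i, TopologicalSpace (Y i)] {F : X → ∀ i, Y i} (hF : Continuous F)
    (h : ∀ x, ∀ U ∈ 𝓝 x, ∃ i, ∃ V ∈ 𝓝 (F x i), {y | F y i ∈ V} ⊆ U) : IsInducing F := by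
  refine isInducing_iff_nhds.2 fun x => le_antisymm (hF.tendsto x).le_comap fun U hU => ?_
  obtain ⟨i, V, hV, hVU⟩ := h x U hU
  exact mem_comap.2 ⟨_, (continuous_apply i).continuousAt.preimage_mem_nhds hV, hVU⟩

theorem metrizableSpace_of_locallyFinite_separating [T0Space X] {ι : Type*} [Countable ι]
    {κ : ι → Type*} (f : ∀ i, κ i → C(X, ℝ))
    (hlf : ∀ i, LocallyFinite fun j => Function.support (f i j))
    (hsep : ∀ x, ∀ U ∈ 𝓝 x, ∃ i j, f i j x ≠ 0 ∧ Function.support (f i j) ⊆ U) :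
    MetrizableSpace X := by
  let Φ : X → ∀ i, κ i →ᵤ ℝ := fun x i => UniformFun.ofFun fun j => f i j x
  have hΦ : Continuous Φ := continuous_pi fun i =>
    (hlf i).continuous_uniformFun_ofFun fun j => (f i j).continuous
  refine (isInducing_pi_of_forall_mem_nhds hΦ fun x U hU => ?_).isEmbedding.metrizableSpace
  obtain ⟨i, j, hfx, hU⟩ := hsep x U hU
  exact ⟨i, {g | g.toFun j ≠ 0},
    (isOpen_ne.preimage (UniformFun.uniformContinuous_eval ℝ j).continuous).mem_nhds hfx, hU⟩

def shrinking (F : Set (Set X)) (s : Set X) : Set X :=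
  ⋃₀ {t ∈ F | closure t ⊆ s}

theorem isOpen_shrinking {F : Set (Set X)} (hF : ∀ t ∈ F, IsOpen t) (s : Set X) :
    IsOpen (shrinking F s) :=
  isOpen_sUnion fun t ht => hF t ht.1

theorem IsDiscreteFamily.closure_shrinking_subset {F : Set (Set X)} (hF : IsDiscreteFamily F)
    (s : Set X) : closure (shrinking F s) ⊆ s := by
  rw [shrinking, (hF.mono fun t ht => ht.1).closure_sUnion]
  exact iUnion₂_subset fun t ht => ht.2

variable {B : ℕ → Set (Set X)}

theorem exists_mem_shrinking [RegularSpace X] (hb : IsTopologicalBasis (⋃ n, B n))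
    {U : Set X} (hU : IsOpen U) {x : X} (hx : x ∈ U) : ∃ n, x ∈ shrinking (B n) U := by
  obtain ⟨C, ⟨hCx, hC⟩, hCU⟩ := (closed_nhds_basis x).mem_iff.mp (hU.mem_nhds hx)
  obtain ⟨t, ht, hxt, htC⟩ :=
    hb.exists_subset_of_mem_open (mem_interior_iff_mem_nhds.2 hCx) isOpen_interior
  obtain ⟨n, hn⟩ := mem_iUnion.mp ht
  exact ⟨n, t, ⟨hn, (closure_minimal (htC.trans interior_subset) hC).trans hCU⟩, hxt⟩

theorem hasSeparatingCover_of_sigmaDiscrete_basis [RegularSpace X]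
    (hd : ∀ n, IsDiscreteFamily (B n)) (hb : IsTopologicalBasis (⋃ n, B n))
    {s t : Set X} (ht : IsClosed t) (hst : Disjoint s t) : HasSeparatingCover s t := by
  refine ⟨fun n => shrinking (B n) tᶜ, fun x hx => ?_, fun n => ⟨?_, ?_⟩⟩
  · exact mem_iUnion.2 (exists_mem_shrinking hb ht.isOpen_compl (disjoint_left.1 hst hx))
  · exact isOpen_shrinking (fun t ht => hb.isOpen (mem_iUnion.2 ⟨n, ht⟩)) _
  · exact subset_compl_iff_disjoint_right.1 ((hd n).closure_shrinking_subset _)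

theorem normalSpace_of_sigmaDiscrete_basis [RegularSpace X]
    (hd : ∀ n, IsDiscreteFamily (B n)) (hb : IsTopologicalBasis (⋃ n, B n)) :
    NormalSpace X where
  normal _ _ hs ht hst := hasSeparatingCovers_iff_separatedNhds.1
    ⟨hasSeparatingCover_of_sigmaDiscrete_basis hd hb ht hst,
      hasSeparatingCover_of_sigmaDiscrete_basis hd hb hs hst.symm⟩

theorem exists_urysohn_family_of_sigmaDiscrete_basis [RegularSpace X] [NormalSpace X]
    (hd : ∀ n, IsDiscreteFamily (B n)) (hb : IsTopologicalBasis (⋃ n, B n)) :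
    ∃ f : ∀ p : ℕ × ℕ, B p.1 → C(X, ℝ), (∀ p s, Function.support (f p s) ⊆ s) ∧
      ∀ x, ∀ U ∈ 𝓝 x, ∃ p s, f p s x ≠ 0 ∧ (s : Set X) ⊆ U := by
  have hB : ∀ n, ∀ s ∈ B n, IsOpen s := fun n s hs => hb.isOpen (mem_iUnion.2 ⟨n, hs⟩)
  have hurysohn : ∀ (p : ℕ × ℕ) (s : B p.1), ∃ f : C(X, ℝ),
      EqOn f 0 (s : Set X)ᶜ ∧ EqOn f 1 (closure (shrinking (B p.2) s)) := fun p s =>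
    let ⟨f, h0, h1, _⟩ := exists_continuous_zero_one_of_isClosed
      (hB p.1 s s.2).isClosed_compl isClosed_closure
      (disjoint_compl_left.mono_right ((hd p.2).closure_shrinking_subset s))
    ⟨f, h0, h1⟩
  choose f hf0 hf1 using hurysohn
  refine ⟨f, fun p s x hx => by_contra fun hxs => hx (hf0 p s hxs), fun x U hU => ?_⟩
  obtain ⟨s, hs, hxs, hsU⟩ := hb.mem_nhds_iff.1 hU
  obtain ⟨n, hsn⟩ := mem_iUnion.1 hs
  obtain ⟨m, hxm⟩ := exists_mem_shrinking hb (hB n s hsn) hxs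
  refine ⟨(n, m), ⟨s, hsn⟩, ?_, hsU⟩
  rw [hf1 (n, m) ⟨s, hsn⟩ (subset_closure hxm)]
  exact one_ne_zero

end

theorem bing_nagata_smirnov {X : Type*} [TopologicalSpace X]
    [T0Space X] [RegularSpace X]
    (h : ∃ B : ℕ → Set (Set X), (∀ n, IsDiscreteFamily (B n)) ∧
      TopologicalSpace.IsTopologicalBasis (⋃ n, B n)) :
    TopologicalSpace.MetrizableSpace X := by
  obtain ⟨B, hd, hb⟩ := h
  have := normalSpace_of_sigmaDiscrete_basis hd hb
  obtain ⟨f, hsupp, hsep⟩ := exists_urysohn_family_of_sigmaDiscrete_basis hd hb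
  refine metrizableSpace_of_locallyFinite_separating f
    (fun p => (hd p.1).locallyFinite.subset (hsupp p)) fun x U hU => ?_
  obtain ⟨p, s, hfx, hsU⟩ := hsep x U hU
  exact ⟨p, s, hfx, (hsupp p s).trans hsU⟩
end
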